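/- arXiv:dg-ga/9706009 — 3 statements merged into one kernel-verified Lean document; each statement's English description precedes it below -/
import Mathlib

section
/- Let P = G ×_H F be a homogeneous fiber bundle over G/H associated to an action of a compact subgroup H of a Lie group G on a manifold F, and let X be a G-invariant vector field on P tangent to the fibers. If the point p in the fiber F over the identity coset is H-stable for the restricted flow of X on F, then p is H-stable for the flow of X on all of P (where H acts on P as a subgroup of G). -/
/-- Relative (`H`-) stability of a point for a flow, with respect to a given
action of `H'` on `X`: every invariant open neighborhood of the orbit contains
an invariant open neighborhood of the orbit that the flow never leaves. -/
def IsRelStable {X H' : Type*} [TopologicalSpace X]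
    (act : H' → X → X) (Φ : ℝ → X → X) (p : X) : Prop :=
  ∀ V : Set X, IsOpen V → (∀ h : H', ∀ x ∈ V, act h x ∈ V) →
    (∀ h : H', act h p ∈ V) →
    ∃ U : Set X, U ⊆ V ∧ IsOpen U ∧ (∀ h : H', ∀ x ∈ U, act h x ∈ U) ∧
      (∀ h : H', act h p ∈ U) ∧ ∀ t : ℝ, Φ t '' U ⊆ V

section AssocBundle

variable {G F : Type*} [Group G] (H : Subgroup G) [MulAction H F]

/-- The relation on `G × F` whose quotient is the associated bundle
`G ×_H F`:  `(g, f) ∼ (g h⁻¹, h • f)` for `h ∈ H`. -/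
def assocRel : G × F → G × F → Prop :=
  fun a b => ∃ h : H, b = (a.1 * (h : G)⁻¹, h • a.2)

/-- The associated bundle `P = G ×_H F = (G × F)/H`. -/
def AssocBundle (F : Type*) [MulAction H F] := Quot (assocRel (F := F) H)

instance [TopologicalSpace G] [TopologicalSpace F] :
    TopologicalSpace (AssocBundle H F) :=
  instTopologicalSpaceQuot

/-- The class `[g, f]` of `(g, f)` in `G ×_H F`. -/
def AssocBundle.mk (g : G) (f : F) : AssocBundle H F :=
  Quot.mk _ (g, f)

/-- The `G`-action `g · [a, f] = [g a, f]` on `G ×_H F`. -/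
def AssocBundle.gAct (g : G) : AssocBundle H F → AssocBundle H F :=
  Quot.map (fun a => (g * a.1, a.2))
    (by rintro a b ⟨h, rfl⟩; exact ⟨h, by simp [mul_assoc]⟩)

/-- The bundle projection `G ×_H F → G/H`. -/
def AssocBundle.proj : AssocBundle H F → G ⧸ H :=
  Quot.lift (fun a => QuotientGroup.mk a.1)
    (by
      rintro a b ⟨h, rfl⟩
      exact (QuotientGroup.mk_mul_of_mem a.1 (inv_mem h.2)).symm)

/-- The inclusion of the fiber over the identity coset, `f ↦ [1, f]`. -/
def AssocBundle.incl (f : F) : AssocBundle H F :=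
  AssocBundle.mk H 1 f

end AssocBundle

section Aux

variable {G F : Type*} [Group G] (H : Subgroup G) [MulAction H F]

lemma assocRel_equivalence : Equivalence (assocRel (F := F) H) := by
  constructor
  · intro a; exact ⟨1, by simp⟩
  · rintro a b ⟨h, rfl⟩
    exact ⟨h⁻¹, by simp [mul_assoc]⟩
  · rintro a b c ⟨h, rfl⟩ ⟨k, rfl⟩
    exact ⟨k * h, by simp [mul_assoc, mul_smul]⟩

lemma assocBundle_mk_eq_iff {a b : G × F} :
    (Quot.mk (assocRel H) a = Quot.mk (assocRel H) b) ↔ assocRel H a b :=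
  Quot.eq.trans (assocRel_equivalence H).eqvGen_iff

end Aux

open scoped Pointwise in
/-- Let `P = G ×_H F` be the homogeneous fiber bundle associated
to an action of a compact subgroup `H` of a Lie group `G` on `F`.  If a
`G`-equivariant, fiber-preserving flow on `P` restricts on the fiber `F` over
the identity coset to a flow for which `p ∈ F` is `H`-stable, then `p` (i.e.
`[1, p] ∈ P`) is `H`-stable for the flow on all of `P`, where `H` acts on `P`
as a subgroup of `G`. -/
theorem stmt_5
    {E : Type*} [NormedAddCommGroup E] [NormedSpace ℝ E]
    {G : Type*} [Group G] [TopologicalSpace G] [ChartedSpace E G]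
    [LieGroup (modelWithCornersSelf ℝ E) (⊤ : ℕ∞) G]
    {F : Type*} [TopologicalSpace F]
    (H : Subgroup G) (hHcpt : IsCompact (H : Set G))
    [MulAction H F]
    (hact : Continuous fun q : H × F => q.1 • q.2)
    (Φ : ℝ → AssocBundle H F → AssocBundle H F)
    (hΦcont : ∀ t, Continuous (Φ t))
    (hflow : Φ 0 = id) (hflow' : ∀ t s, Φ (t + s) = Φ t ∘ Φ s)
    -- G-invariance of the vector field: the flow is G-equivariant
    (hequiv : ∀ (t : ℝ) (g : G) (x : AssocBundle H F),
      Φ t (AssocBundle.gAct H g x) = AssocBundle.gAct H g (Φ t x))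
    -- the vector field is tangent to the fibers: the flow preserves fibers
    (hfib : ∀ (t : ℝ) (x : AssocBundle H F),
      AssocBundle.proj H (Φ t x) = AssocBundle.proj H x)
    -- the restricted flow on the fiber F over the identity coset
    (φ : ℝ → F → F)
    (hres : ∀ (t : ℝ) (f : F), Φ t (AssocBundle.incl H f) = AssocBundle.incl H (φ t f))
    (p : F)
    (hstab : IsRelStable (fun (h : H) (f : F) => h • f) φ p) :
    IsRelStable (fun (h : H) (x : AssocBundle H F) => AssocBundle.gAct H (h : G) x)
      Φ (AssocBundle.incl H p) := by
  classical
  haveI : ContinuousMul G := continuousMul_of_contMDiffMul (modelWithCornersSelf ℝ E) (⊤ : ℕ∞)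
  haveI : CompactSpace H := isCompact_iff_compactSpace.mp hHcpt
  intro V hVopen hVinv hVorb
  -- the flow in bundle coordinates
  have key : ∀ (t : ℝ) (g : G) (f : F),
      Φ t (Quot.mk (assocRel H) (g, f)) = Quot.mk (assocRel H) (g, φ t f) := by
    intro t g f
    have h1 : (Quot.mk (assocRel H) (g, f) : AssocBundle H F)
        = AssocBundle.gAct H g (AssocBundle.incl H f) := by
      show Quot.mk (assocRel H) (g, f) = Quot.mk (assocRel H) (g * 1, f)
      rw [mul_one]
    rw [h1, hequiv, hres]
    show AssocBundle.gAct H g (Quot.mk (assocRel H) ((1 : G), φ t f)) = _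
    show Quot.mk (assocRel H) (g * 1, φ t f) = _
    rw [mul_one]
  -- the orbit points, in bundle coordinates, sit in V
  have mkV : ∀ h h' : H, Quot.mk (assocRel H) ((h : G), h' • p) ∈ V := by
    intro h h'
    have e1 : AssocBundle.gAct H (h : G)
        (AssocBundle.gAct H (h' : G) (AssocBundle.incl H p))
        = Quot.mk (assocRel H) ((h : G), h' • p) := by
      show Quot.mk (assocRel H) ((h : G) * ((h' : G) * 1), p) = _
      rw [mul_one]
      exact Quot.sound ⟨h', by simp [mul_assoc]⟩
    rw [← e1]
    exact hVinv h _ (hVorb h')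
  -- tube lemma around H × (H • p)
  have preVopen : IsOpen ((Quot.mk (assocRel H)) ⁻¹' V : Set (G × F)) :=
    hVopen.preimage continuous_quot_mk
  have horbc : IsCompact (Set.range fun h : H => h • p) :=
    isCompact_range (hact.comp (continuous_id.prodMk continuous_const))
  have hsub : (H : Set G) ×ˢ (Set.range fun h : H => h • p)
      ⊆ (Quot.mk (assocRel H)) ⁻¹' V := by
    rintro ⟨g, f⟩ ⟨hg, h', rfl⟩
    exact mkV ⟨g, hg⟩ h'
  obtain ⟨W, O, hWopen, hOopen, hHW, hSO, hWO⟩ :=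
    generalized_tube_lemma hHcpt horbc preVopen hsub
  -- a bi-H-invariant open neighborhood of H inside a thickening of W
  obtain ⟨N, hN, hHN⟩ := compact_open_separated_mul_right hHcpt hWopen hHW
  have h1N' : (1 : G) ∈ interior N := mem_interior_iff_mem_nhds.mpr hN
  set Wf : Set G := (H : Set G) * interior N * (H : Set G) with hWfdef
  have hWfopen : IsOpen Wf := (isOpen_interior.mul_left).mul_right
  have hHWf : ∀ h : H, (h : G) ∈ Wf := by
    intro h
    have e : (h : G) = ((h : G) * 1) * 1 := by simp
    rw [e]
    exact Set.mul_mem_mul (Set.mul_mem_mul h.2 h1N') H.one_mem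
  have hWfl : ∀ (h : H) (g : G), g ∈ Wf → (h : G) * g ∈ Wf := by
    rintro h g ⟨ab, ⟨a, ha, b, hb, rfl⟩, c, hc, rfl⟩
    have e : (h : G) * (a * b * c) = ((h : G) * a) * b * c := by group
    rw [e]
    exact Set.mul_mem_mul (Set.mul_mem_mul (H.mul_mem h.2 ha) hb) hc
  have hWfr : ∀ (h : H) (g : G), g ∈ Wf → g * (h : G) ∈ Wf := by
    rintro h g ⟨ab, hab, c, hc, rfl⟩
    have e : ab * c * (h : G) = ab * (c * (h : G)) := by group
    rw [e]
    exact Set.mul_mem_mul hab (H.mul_mem hc h.2)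
  -- key decomposition: points of Wf over "O-saturated" fibers lie in V
  have hdecomp : ∀ g ∈ Wf, ∀ f : F, (∀ h : H, h • f ∈ O) →
      Quot.mk (assocRel H) (g, f) ∈ V := by
    rintro g ⟨ab, ⟨a, ha, b, hb, rfl⟩, c, hc, rfl⟩ f hf
    have e : Quot.mk (assocRel H) (a * b * c, f)
        = Quot.mk (assocRel H) (a * b, (⟨c, hc⟩ : H) • f) :=
      Quot.sound ⟨⟨c, hc⟩, by simp [mul_assoc]⟩
    rw [e]
    exact hWO ⟨hHN (Set.mul_mem_mul ha (interior_subset hb)), hf ⟨c, hc⟩⟩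
  -- the H-invariant open set V2 in the fiber
  set V2 : Set F := {f : F | ∀ h : H, h • f ∈ O} with hV2def
  have hV2open : IsOpen V2 := by
    rw [isOpen_iff_forall_mem_open]
    intro f hf
    have hsub2 : (Set.univ : Set H) ×ˢ ({f} : Set F)
        ⊆ (fun q : H × F => q.1 • q.2) ⁻¹' O := by
      rintro ⟨h, f'⟩ ⟨-, hf'⟩
      rcases hf' with rfl
      exact hf h
    obtain ⟨u, v, _, hv, hu1, hv1, huv⟩ :=
      generalized_tube_lemma isCompact_univ isCompact_singleton
        (hOopen.preimage hact) hsub2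
    exact ⟨v, fun f' hf' h => huv (Set.mk_mem_prod (hu1 (Set.mem_univ h)) hf'), hv, hv1 rfl⟩
  have hV2inv : ∀ (h : H), ∀ f ∈ V2, h • f ∈ V2 := by
    intro h f hf h'
    rw [← mul_smul]
    exact hf (h' * h)
  have hV2orb : ∀ h : H, h • p ∈ V2 := by
    intro h h'
    rw [← mul_smul]
    exact hSO ⟨h' * h, rfl⟩
  obtain ⟨U0, hU0V2, hU0open, hU0inv, hU0orb, hU0flow⟩ :=
    hstab V2 hV2open hV2inv hV2orb
  -- the candidate open set in the bundle
  refine ⟨Quot.mk (assocRel H) '' (Wf ×ˢ U0), ?_, ?_, ?_, ?_, ?_⟩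
  · rintro x ⟨⟨g, f⟩, ⟨hg, hf⟩, rfl⟩
    exact hdecomp g hg f (hU0V2 hf)
  · refine (isQuotientMap_quot_mk (r := assocRel (F := F) H)).isOpen_preimage.mp ?_
    have hsat : (Quot.mk (assocRel H)) ⁻¹' (Quot.mk (assocRel H) '' (Wf ×ˢ U0))
        = Wf ×ˢ U0 := by
      apply Set.Subset.antisymm
      · rintro a ⟨b, hb, hba⟩
        obtain ⟨h, rfl⟩ := (assocBundle_mk_eq_iff H).mp hba
        refine ⟨by simpa using hWfr h⁻¹ b.1 hb.1, hU0inv h _ hb.2⟩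
      · exact Set.subset_preimage_image _ _
    exact (congrArg IsOpen hsat).mpr (hWfopen.prod hU0open)
  · rintro h x ⟨⟨g, f⟩, ⟨hg, hf⟩, rfl⟩
    exact ⟨((h : G) * g, f), ⟨hWfl h g hg, hf⟩, rfl⟩
  · intro h
    refine ⟨((h : G), p), ⟨hHWf h, by simpa using hU0orb 1⟩, ?_⟩
    show _ = Quot.mk (assocRel H) ((h : G) * 1, p)
    rw [mul_one]
  · intro t
    rintro x ⟨y, ⟨⟨g, f⟩, ⟨hg, hf⟩, rfl⟩, rfl⟩
    rw [key]
    exact hdecomp g hg (φ t f) fun h => hU0flow t ⟨f, hf, rfl⟩ h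
end

section
/- Let G be a Lie group, H ⊂ G a compact subgroup, F an H-manifold, P = G ×_H F, and s : U → G an H-equivariant local section of G → G/H near 1H (with s(a·x) = a s(x) a⁻¹). Then the map ψ : U × F → P, ψ(x,f) = [s(x), f], is an H-equivariant open embedding, where H acts diagonally on U × F and via left multiplication (as a subgroup of G) on P. -/
/-- Given an `H`-equivariant continuous local section
`s : U → G` of `G → G/H` near the identity coset (`s(a·x) = a s(x) a⁻¹`), the
map `ψ : U × F → P = G ×_H F`, `ψ(x, f) = [s(x), f]`, is an `H`-equivariant
open embedding, where `H` acts diagonally on `U × F` and by left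
multiplication (as a subgroup of `G`) on `P`. -/
theorem stmt_7
    {G F : Type*} [Group G] [TopologicalSpace G] [IsTopologicalGroup G]
    [TopologicalSpace F]
    (H : Subgroup G) (hHcpt : IsCompact (H : Set G)) [MulAction H F]
    (hact : Continuous fun q : H × F => q.1 • q.2)
    (U : Set (G ⧸ H)) (hUopen : IsOpen U) (hU1 : ((1 : G) : G ⧸ H) ∈ U)
    (hUinv : ∀ a : H, ∀ x ∈ U, ((a : G) • x) ∈ U)
    (s : G ⧸ H → G) (hscont : ContinuousOn s U)
    (hsec : ∀ x ∈ U, (QuotientGroup.mk (s x) : G ⧸ H) = x)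
    (hsequiv : ∀ a : H, ∀ x ∈ U, s ((a : G) • x) = (a : G) * s x * (a : G)⁻¹) :
    -- ψ is an open embedding
    Topology.IsOpenEmbedding
      (fun q : U × F => AssocBundle.mk H (s (q.1 : G ⧸ H)) q.2) ∧
    -- ψ is H-equivariant: ψ(a·x, a·f) = a · ψ(x, f)
    (∀ a : H, ∀ x ∈ U, ∀ f : F,
      AssocBundle.mk H (s ((a : G) • x)) (a • f) =
        AssocBundle.gAct H (a : G) (AssocBundle.mk H (s x) f)) := by
  
  classical
  -- the defining relation is an equivalence
  have requiv : Equivalence (assocRel (F := F) H) := by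
    constructor
    · intro a; exact ⟨1, by simp⟩
    · rintro a b ⟨h, rfl⟩
      exact ⟨h⁻¹, by simp [mul_assoc]⟩
    · rintro a b c ⟨h₁, rfl⟩ ⟨h₂, rfl⟩
      exact ⟨h₂ * h₁, by simp [mul_assoc, mul_smul]⟩
  have key : ∀ (g g' : G) (f f' : F),
      AssocBundle.mk H g f = AssocBundle.mk H g' f' ↔
        ∃ h : H, (g', f') = (g * (h : G)⁻¹, h • f) := by
    intro g g' f f'
    constructor
    · intro hq
      have := requiv.eqvGen_iff.mp (Quot.eq.mp hq)
      exact this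
    · intro ⟨h, hh⟩
      exact Quot.sound ⟨h, hh⟩
  have hmemH : ∀ p : G × F, (QuotientGroup.mk p.1 : G ⧸ H) ∈ U →
      (s (QuotientGroup.mk p.1))⁻¹ * p.1 ∈ H := by
    intro p hp
    exact QuotientGroup.eq.mp (hsec _ hp)
  -- the comparison map back
  set D : Set (G × F) := {p : G × F | (QuotientGroup.mk p.1 : G ⧸ H) ∈ U} with hD
  have hDopen : IsOpen D :=
    hUopen.preimage (continuous_quotient_mk'.comp continuous_fst)
  have hcontmkfst : Continuous fun p : D => (QuotientGroup.mk (p : G × F).1 : G ⧸ H) :=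
    continuous_quotient_mk'.comp (continuous_fst.comp continuous_subtype_val)
  let Θ : D → U × F := fun p =>
    (⟨QuotientGroup.mk (p : G × F).1, p.2⟩,
      (⟨(s (QuotientGroup.mk (p : G × F).1))⁻¹ * (p : G × F).1, hmemH _ p.2⟩ : H) • (p : G × F).2)
  have hscont' : Continuous fun p : D => s (QuotientGroup.mk (p : G × F).1) :=
    hscont.comp_continuous hcontmkfst fun p => p.2
  have hΘcont : Continuous Θ := by
    refine Continuous.prodMk (hcontmkfst.subtype_mk _) ?_
    exact hact.comp (Continuous.prodMk
      (Continuous.subtype_mk (hscont'.inv.mul (continuous_fst.comp continuous_subtype_val)) _)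
      (continuous_snd.comp continuous_subtype_val))
  -- continuity of ψ
  have hψcont : Continuous
      (fun q : U × F => AssocBundle.mk H (s (q.1 : G ⧸ H)) q.2) := by
    have h1 : Continuous fun q : U × F => s (q.1 : G ⧸ H) :=
      hscont.comp_continuous (continuous_subtype_val.comp continuous_fst) fun q => q.1.2
    exact continuous_quot_mk.comp (h1.prodMk continuous_snd)
  -- injectivity of ψ
  have hψinj : Function.Injective
      (fun q : U × F => AssocBundle.mk H (s (q.1 : G ⧸ H)) q.2) := by
    rintro ⟨⟨x, hx⟩, f⟩ ⟨⟨y, hy⟩, g⟩ hq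
    obtain ⟨h, hh⟩ := (key _ _ _ _).mp hq
    have h1 : s y = s x * (h : G)⁻¹ := congrArg Prod.fst hh
    have h2 : g = h • f := congrArg Prod.snd hh
    have hxy : y = x := by
      calc y = QuotientGroup.mk (s y) := (hsec y hy).symm
        _ = QuotientGroup.mk (s x * (h : G)⁻¹) := by rw [h1]
        _ = QuotientGroup.mk (s x) := QuotientGroup.mk_mul_of_mem _ (inv_mem h.2)
        _ = x := hsec x hx
    subst hxy
    have hsx : s y = s y * (h : G)⁻¹ := h1
    have hh1 : (h : G) = 1 := by
      have h' : s y * 1 = s y * (h : G)⁻¹ := by simpa using hsx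
      exact inv_eq_one.mp (mul_left_cancel h').symm
    have : h = 1 := Subtype.ext hh1
    subst this
    simp only [one_smul] at h2
    simp [h2]
  -- ψ is an open map
  have hψopen : IsOpenMap
      (fun q : U × F => AssocBundle.mk H (s (q.1 : G ⧸ H)) q.2) := by
    intro W hW
    refine (isQuotientMap_quot_mk (r := assocRel (F := F) H)).isOpen_preimage.mp ?_
    have himg : Quot.mk (assocRel (F := F) H) ⁻¹'
        ((fun q : U × F => AssocBundle.mk H (s (q.1 : G ⧸ H)) q.2) '' W)
        = Subtype.val '' (Θ ⁻¹' W) := by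
      ext p
      constructor
      · rintro hp
        obtain ⟨⟨⟨x, hx⟩, f⟩, hqW, hq⟩ := hp
        obtain ⟨h, hh⟩ := (key _ _ _ _).mp hq
        have h1 : p.1 = s x * (h : G)⁻¹ := congrArg Prod.fst hh
        have h2 : p.2 = h • f := congrArg Prod.snd hh
        have hmkp : (QuotientGroup.mk p.1 : G ⧸ H) = x := by
          rw [h1, QuotientGroup.mk_mul_of_mem _ (inv_mem h.2), hsec x hx]
        have hpD : p ∈ D := by rw [hD, Set.mem_setOf_eq, hmkp]; exact hx
        refine ⟨⟨p, hpD⟩, ?_, rfl⟩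
        have hΘ : Θ ⟨p, hpD⟩ = (⟨x, hx⟩, f) := by
          have e1 : (⟨(s (QuotientGroup.mk p.1))⁻¹ * p.1, hmemH _ hpD⟩ : H) = h⁻¹ := by
            apply Subtype.ext
            show (s (QuotientGroup.mk p.1))⁻¹ * p.1 = ((h⁻¹ : H) : G)
            rw [hmkp, h1]
            simp [mul_assoc]
          refine Prod.ext (Subtype.ext hmkp) ?_
          show (⟨(s (QuotientGroup.mk p.1))⁻¹ * p.1, hmemH _ hpD⟩ : H) • p.2 = f
          rw [e1, h2, inv_smul_smul]
        rw [Set.mem_preimage, hΘ]; exact hqW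
      · rintro ⟨⟨p', hp'⟩, hΘW, rfl⟩
        refine ⟨Θ ⟨p', hp'⟩, hΘW, ?_⟩
        show AssocBundle.mk H _ _ = _
        refine (Quot.sound ?_).symm
        refine ⟨⟨(s (QuotientGroup.mk p'.1))⁻¹ * p'.1, hmemH _ hp'⟩, ?_⟩
        refine Prod.ext ?_ rfl
        show s (QuotientGroup.mk p'.1) = p'.1 * ((s (QuotientGroup.mk p'.1))⁻¹ * p'.1)⁻¹
        group
    erw [himg]
    exact hDopen.isOpenMap_subtype_val _ (hΘcont.isOpen_preimage W hW)
  refine ⟨Topology.IsOpenEmbedding.of_continuous_injective_isOpenMap hψcont hψinj hψopen, ?_⟩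
  intro a x hx f
  rw [hsequiv a x hx]
  show AssocBundle.mk H ((a : G) * s x * (a : G)⁻¹) (a • f)
      = Quot.mk _ ((a : G) * s x, f)
  exact (Quot.sound ⟨a, rfl⟩).symm
end

section
/- Consider M = T*ℝ² × T*S¹ with coordinates (q₁,q₂,p₁,p₂,θ,p_θ), standard symplectic form, and Hamiltonian h = (q₁p₂ − q₂p₁) + p_θ(p₁² + p₂² − q₁² − q₂²). Then p_θ is a moment map for the S¹-action on the T*S¹ factor, h Poisson-commutes with p_θ, and for every μ ≠ 0 the origin of T*ℝ² is an unstable equilibrium of the reduced Hamiltonian h_μ = (q₁p₂ − q₂p₁) + μ(p₁² + p₂² − q₁² − q₂²), while the origin is a stable equilibrium of h₀ = q₁p₂ − q₂p₁. -/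
/-- Phase space `T*ℝ² × T*S¹` in coordinates `((q₁,q₂,p₁,p₂), θ, p_θ)`
(working in the universal cover of the `θ`-circle). -/
abbrev M16 : Type := (ℝ × ℝ × ℝ × ℝ) × ℝ × ℝ

/-- Standard Poisson bracket in the coordinates `((q₁,q₂,p₁,p₂), θ, p_θ)`. -/
noncomputable def pb16 (F G : M16 → ℝ) (z : M16) : ℝ :=
  fderiv ℝ F z (((1,0,0,0), 0, 0)) * fderiv ℝ G z (((0,0,1,0), 0, 0))
  - fderiv ℝ F z (((0,0,1,0), 0, 0)) * fderiv ℝ G z (((1,0,0,0), 0, 0))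
  + fderiv ℝ F z (((0,1,0,0), 0, 0)) * fderiv ℝ G z (((0,0,0,1), 0, 0))
  - fderiv ℝ F z (((0,0,0,1), 0, 0)) * fderiv ℝ G z (((0,1,0,0), 0, 0))
  + fderiv ℝ F z (((0,0,0,0), 1, 0)) * fderiv ℝ G z (((0,0,0,0), 0, 1))
  - fderiv ℝ F z (((0,0,0,0), 0, 1)) * fderiv ℝ G z (((0,0,0,0), 1, 0))

/-- The Hamiltonian `h = (q₁p₂ − q₂p₁) + p_θ(p₁² + p₂² − q₁² − q₂²)`. -/
noncomputable def h16 : M16 → ℝ :=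
  fun z =>
    (z.1.1 * z.1.2.2.2 - z.1.2.1 * z.1.2.2.1) +
      z.2.2 * (z.1.2.2.1 ^ 2 + z.1.2.2.2 ^ 2 - z.1.1 ^ 2 - z.1.2.1 ^ 2)

/-- The momentum `p_θ` of the `S¹`-action on the `T*S¹` factor. -/
def Ptheta16 : M16 → ℝ := fun z => z.2.2

/-- The Hamiltonian vector field of the reduced Hamiltonian
`h_μ = (q₁p₂ − q₂p₁) + μ(p₁² + p₂² − q₁² − q₂²)` on `T*ℝ²`. -/
def Xmu16 (μ : ℝ) : ℝ × ℝ × ℝ × ℝ → ℝ × ℝ × ℝ × ℝ :=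
  fun z =>
    (-z.2.1 + 2 * μ * z.2.2.1, z.1 + 2 * μ * z.2.2.2,
      -z.2.2.2 + 2 * μ * z.1, z.2.2.1 + 2 * μ * z.2.1)

/-- Lyapunov stability of the origin for the flow of a vector field `X`. -/
def StableOrigin16 (X : ℝ × ℝ × ℝ × ℝ → ℝ × ℝ × ℝ × ℝ) : Prop :=
  ∀ ε > (0:ℝ), ∃ δ > (0:ℝ), ∀ γ : ℝ → ℝ × ℝ × ℝ × ℝ,
    (∀ t : ℝ, HasDerivAt γ (X (γ t)) t) → ‖γ 0‖ < δ → ∀ t ≥ (0:ℝ), ‖γ t‖ < ε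


section Aux16

lemma fderiv_Ptheta16 (z v : M16) : fderiv ℝ Ptheta16 z v = v.2.2 := by
  have h : Ptheta16 = fun z : M16 => ((ContinuousLinearMap.snd ℝ ℝ ℝ).comp
      (ContinuousLinearMap.snd ℝ (ℝ × ℝ × ℝ × ℝ) (ℝ × ℝ))) z := rfl
  rw [h, ContinuousLinearMap.fderiv]
  rfl

noncomputable def pi16 : M16 →L[ℝ] ((ℝ × ℝ × ℝ × ℝ) × ℝ) :=
  (ContinuousLinearMap.fst ℝ (ℝ × ℝ × ℝ × ℝ) (ℝ × ℝ)).prod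
    ((ContinuousLinearMap.snd ℝ ℝ ℝ).comp (ContinuousLinearMap.snd ℝ (ℝ × ℝ × ℝ × ℝ) (ℝ × ℝ)))

noncomputable def H16aux : ((ℝ × ℝ × ℝ × ℝ) × ℝ) → ℝ := fun w =>
  (w.1.1 * w.1.2.2.2 - w.1.2.1 * w.1.2.2.1) +
    w.2 * (w.1.2.2.1 ^ 2 + w.1.2.2.2 ^ 2 - w.1.1 ^ 2 - w.1.2.1 ^ 2)

lemma H16aux_diff : Differentiable ℝ H16aux := by
  unfold H16aux; fun_prop

lemma h16_diff : Differentiable ℝ h16 := by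
  unfold h16; fun_prop

lemma fderiv_h16_theta (z : M16) : fderiv ℝ h16 z (((0,0,0,0), 1, 0)) = 0 := by
  have hcomp : h16 = H16aux ∘ pi16 := rfl
  rw [hcomp, fderiv_comp z (H16aux_diff _) (pi16.differentiableAt)]
  rw [ContinuousLinearMap.fderiv]
  simp only [ContinuousLinearMap.coe_comp', Function.comp_apply]
  have : pi16 (((0,0,0,0), 1, 0) : M16) = 0 := by
    simp [pi16, Prod.ext_iff]
  rw [this, map_zero]

lemma pb16_Ptheta (F : M16 → ℝ) (z : M16) :
    pb16 F Ptheta16 z = fderiv ℝ F z (((0,0,0,0), 1, 0)) := by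
  simp [pb16, fderiv_Ptheta16]

lemma comp_derivs16 {γ : ℝ → ℝ × ℝ × ℝ × ℝ} {v : ℝ × ℝ × ℝ × ℝ} {t : ℝ}
    (h : HasDerivAt γ v t) :
    HasDerivAt (fun s => (γ s).1) v.1 t ∧ HasDerivAt (fun s => (γ s).2.1) v.2.1 t ∧
    HasDerivAt (fun s => (γ s).2.2.1) v.2.2.1 t ∧ HasDerivAt (fun s => (γ s).2.2.2) v.2.2.2 t := by
  have h1 := ((ContinuousLinearMap.fst ℝ ℝ (ℝ × ℝ × ℝ)).hasFDerivAt).comp_hasDerivAt t h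
  have h2 := ((ContinuousLinearMap.snd ℝ ℝ (ℝ × ℝ × ℝ)).hasFDerivAt).comp_hasDerivAt t h
  have h21 := ((ContinuousLinearMap.fst ℝ ℝ (ℝ × ℝ)).hasFDerivAt).comp_hasDerivAt t h2
  have h22 := ((ContinuousLinearMap.snd ℝ ℝ (ℝ × ℝ)).hasFDerivAt).comp_hasDerivAt t h2
  have h221 := ((ContinuousLinearMap.fst ℝ ℝ ℝ).hasFDerivAt).comp_hasDerivAt t h22
  have h222 := ((ContinuousLinearMap.snd ℝ ℝ ℝ).hasFDerivAt).comp_hasDerivAt t h22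
  exact ⟨h1, h21, h221, h222⟩

lemma sq_norm_le16 (z : ℝ × ℝ × ℝ × ℝ) :
    ‖z‖ ^ 2 ≤ z.1 ^ 2 + z.2.1 ^ 2 + z.2.2.1 ^ 2 + z.2.2.2 ^ 2 := by
  have key : ∀ x : ℝ, x = z.1 ∨ x = z.2.1 ∨ x = z.2.2.1 ∨ x = z.2.2.2 →
      |x| ^ 2 ≤ z.1 ^ 2 + z.2.1 ^ 2 + z.2.2.1 ^ 2 + z.2.2.2 ^ 2 := by
    rintro x (rfl | rfl | rfl | rfl) <;> rw [sq_abs] <;>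
      nlinarith [sq_nonneg z.1, sq_nonneg z.2.1, sq_nonneg z.2.2.1, sq_nonneg z.2.2.2]
  have hn : ‖z‖ = max |z.1| (max |z.2.1| (max |z.2.2.1| |z.2.2.2|)) := by
    simp [Prod.norm_def, Real.norm_eq_abs]
  rw [hn]
  rcases max_cases |z.1| (max |z.2.1| (max |z.2.2.1| |z.2.2.2|)) with ⟨h,_⟩|⟨h,_⟩
  · rw [h]; exact key _ (Or.inl rfl)
  · rw [h]
    rcases max_cases |z.2.1| (max |z.2.2.1| |z.2.2.2|) with ⟨h2,_⟩|⟨h2,_⟩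
    · rw [h2]; exact key _ (Or.inr (Or.inl rfl))
    · rw [h2]
      rcases max_cases |z.2.2.1| |z.2.2.2| with ⟨h3,_⟩|⟨h3,_⟩ <;> rw [h3]
      · exact key _ (Or.inr (Or.inr (Or.inl rfl)))
      · exact key _ (Or.inr (Or.inr (Or.inr rfl)))

lemma comp_le_norm16 (z : ℝ × ℝ × ℝ × ℝ) :
    |z.1| ≤ ‖z‖ ∧ |z.2.1| ≤ ‖z‖ ∧ |z.2.2.1| ≤ ‖z‖ ∧ |z.2.2.2| ≤ ‖z‖ := by
  have hn : ‖z‖ = max |z.1| (max |z.2.1| (max |z.2.2.1| |z.2.2.2|)) := by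
    simp [Prod.norm_def, Real.norm_eq_abs]
  rw [hn]
  refine ⟨le_max_left _ _, ?_, ?_, ?_⟩
  · exact le_trans (le_max_left _ _) (le_max_right _ _)
  · exact le_trans (le_trans (le_max_left _ _) (le_max_right _ _)) (le_max_right _ _)
  · exact le_trans (le_trans (le_max_right _ _) (le_max_right _ _)) (le_max_right _ _)

lemma stable16_0 : StableOrigin16 (Xmu16 0) := by
  intro ε hε
  refine ⟨ε / 2, by positivity, ?_⟩
  intro γ hγ h0 t ht
  set N : ℝ → ℝ := fun s => (γ s).1 ^ 2 + (γ s).2.1 ^ 2 + (γ s).2.2.1 ^ 2 + (γ s).2.2.2 ^ 2 with hN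
  have hNd : ∀ s, HasDerivAt N 0 s := by
    intro s
    obtain ⟨h1, h2, h3, h4⟩ := comp_derivs16 (hγ s)
    have := (((h1.pow 2).add (h2.pow 2)).add (h3.pow 2)).add (h4.pow 2)
    refine this.congr_deriv ?_
    simp only [Xmu16]
    ring
  have hNc : ∀ s, N s = N 0 := by
    intro s
    have : ∀ x y : ℝ, N x = N y :=
      is_const_of_deriv_eq_zero (fun x => (hNd x).differentiableAt)
        (fun x => (hNd x).deriv)
    exact this s 0
  have h1 : ‖γ t‖ ^ 2 ≤ N t := sq_norm_le16 (γ t)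
  have h2 : N 0 ≤ 4 * ‖γ 0‖ ^ 2 := by
    obtain ⟨c1, c2, c3, c4⟩ := comp_le_norm16 (γ 0)
    have e1 := pow_le_pow_left₀ (abs_nonneg _) c1 2
    have e2 := pow_le_pow_left₀ (abs_nonneg _) c2 2
    have e3 := pow_le_pow_left₀ (abs_nonneg _) c3 2
    have e4 := pow_le_pow_left₀ (abs_nonneg _) c4 2
    rw [sq_abs] at e1 e2 e3 e4
    simp only [hN]
    nlinarith
  have h3 : ‖γ t‖ ^ 2 < ε ^ 2 := by
    have := hNc t
    nlinarith [norm_nonneg (γ 0), norm_nonneg (γ t)]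
  exact lt_of_pow_lt_pow_left₀ 2 (le_of_lt hε) h3

lemma unstable16 (μ : ℝ) (hμ : μ ≠ 0) : ¬ StableOrigin16 (Xmu16 μ) := by
  intro hs
  obtain ⟨δ, hδ, hst⟩ := hs 1 one_pos
  set a : ℝ := |μ| with ha
  have ha0 : 0 < a := abs_pos.mpr hμ
  set s : ℝ := if 0 < μ then 1 else -1 with hsdef
  have hμs : μ * s = a := by
    rcases lt_or_ge 0 μ with h | h
    · simp [hsdef, ha, if_pos h, abs_of_pos h]
    · have h' : ¬ (0 < μ) := not_lt.mpr h
      simp [hsdef, ha, if_neg h', abs_of_nonpos h]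
  have hsa : s * a = μ := by
    rcases lt_or_ge 0 μ with h | h
    · simp [hsdef, ha, if_pos h, abs_of_pos h]
    · have h' : ¬ (0 < μ) := not_lt.mpr h
      simp [hsdef, ha, if_neg h', abs_of_nonpos h]
  set c : ℝ := δ / 2 with hc
  have hc0 : 0 < c := by positivity
  set E : ℝ → ℝ := fun t => c * Real.exp (2 * a * t) with hE
  set γ : ℝ → ℝ × ℝ × ℝ × ℝ := fun t =>
    (E t * Real.cos t, E t * Real.sin t, s * (E t * Real.cos t), s * (E t * Real.sin t)) with hγdef
  have hEd : ∀ t, HasDerivAt E (2 * a * E t) t := by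
    intro t
    have h1 : HasDerivAt (fun t : ℝ => 2 * a * t) (2 * a) t := by
      simpa using (hasDerivAt_id t).const_mul (2 * a)
    have h2 := h1.exp
    have := h2.const_mul c
    simpa [hE, mul_comm, mul_assoc, mul_left_comm] using this
  have hx1 : ∀ t, HasDerivAt (fun t => E t * Real.cos t)
      (2 * a * (E t * Real.cos t) - E t * Real.sin t) t := by
    intro t
    have := (hEd t).mul (Real.hasDerivAt_cos t)
    refine this.congr_deriv ?_; ring
  have hx2 : ∀ t, HasDerivAt (fun t => E t * Real.sin t)
      (2 * a * (E t * Real.sin t) + E t * Real.cos t) t := by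
    intro t
    have := (hEd t).mul (Real.hasDerivAt_sin t)
    refine this.congr_deriv ?_; ring
  have hγ : ∀ t, HasDerivAt γ (Xmu16 μ (γ t)) t := by
    intro t
    have h3 := (hx1 t).const_mul s
    have h4 := (hx2 t).const_mul s
    have hprod := (hx1 t).prodMk ((hx2 t).prodMk (h3.prodMk h4))
    refine hprod.congr_deriv (Eq.symm ?_)
    simp only [Xmu16, hγdef, Prod.mk.injEq]
    refine ⟨?_, ?_, ?_, ?_⟩
    · linear_combination (2 * E t * Real.cos t) * hμs
    · linear_combination (2 * E t * Real.sin t) * hμs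
    · linear_combination (-2 * E t * Real.cos t) * hsa
    · linear_combination (-2 * E t * Real.sin t) * hsa
  have h0 : ‖γ 0‖ < δ := by
    have hE0 : E 0 = c := by simp [hE]
    have hss : |s| = 1 := by rw [hsdef]; split <;> simp
    have h1 : ‖γ 0‖ = max c (max 0 (max c 0)) := by
      simp [hγdef, Prod.norm_def, Real.norm_eq_abs, hE0, abs_mul, hss, abs_of_pos hc0]
    have h2 : max c (max 0 (max c 0)) = c := by
      rw [max_eq_left hc0.le, max_eq_right hc0.le, max_self]
    rw [h1, h2]; linarith
  set T : ℝ := max 0 (Real.log (4 / c) / (2 * a)) with hT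
  have hT0 : T ≥ 0 := le_max_left _ _
  have hexp : 4 / c ≤ Real.exp (2 * a * T) := by
    have h1 : Real.log (4 / c) ≤ 2 * a * T := by
      have : Real.log (4 / c) / (2 * a) ≤ T := le_max_right _ _
      calc Real.log (4 / c) = 2 * a * (Real.log (4 / c) / (2 * a)) := by
            field_simp
        _ ≤ 2 * a * T := by nlinarith
    calc 4 / c = Real.exp (Real.log (4 / c)) := by
          rw [Real.exp_log (by positivity)]
      _ ≤ Real.exp (2 * a * T) := Real.exp_le_exp.mpr h1
  have hET : 4 ≤ E T := by
    have : c * (4 / c) ≤ c * Real.exp (2 * a * T) := by nlinarith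
    rw [mul_div_cancel₀ _ (ne_of_gt hc0)] at this
    exact this
  have hlt := hst γ hγ h0 T hT0
  have hcs : 1 / 2 ≤ max |Real.cos T| |Real.sin T| := by
    by_contra h
    push_neg at h
    have h1 : |Real.cos T| < 1/2 := lt_of_le_of_lt (le_max_left _ _) h
    have h2 : |Real.sin T| < 1/2 := lt_of_le_of_lt (le_max_right _ _) h
    have := Real.sin_sq_add_cos_sq T
    nlinarith [sq_abs (Real.cos T), sq_abs (Real.sin T),
      abs_nonneg (Real.cos T), abs_nonneg (Real.sin T)]
  have hge : 2 ≤ ‖γ T‖ := by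
    have hEpos : 0 < E T := by positivity
    have hn1 : |E T * Real.cos T| ≤ ‖γ T‖ := by
      have : |E T * Real.cos T| = ‖(γ T).1‖ := by
        simp [hγdef, Real.norm_eq_abs, abs_mul, abs_of_pos hEpos]
      rw [this]; exact norm_fst_le _
    have hn2 : |E T * Real.sin T| ≤ ‖γ T‖ := by
      have : |E T * Real.sin T| = ‖(γ T).2.1‖ := by
        simp [hγdef, Real.norm_eq_abs, abs_mul, abs_of_pos hEpos]
      rw [this]; exact le_trans (norm_fst_le _) (norm_snd_le _)
    have habs1 : |E T * Real.cos T| = E T * |Real.cos T| := by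
      simp [abs_mul, abs_of_pos hEpos]
    have habs2 : |E T * Real.sin T| = E T * |Real.sin T| := by
      simp [abs_mul, abs_of_pos hEpos]
    rcases le_max_iff.mp hcs with h | h
    · have : 2 ≤ E T * |Real.cos T| := by nlinarith
      linarith [habs1 ▸ this, hn1]
    · have : 2 ≤ E T * |Real.sin T| := by nlinarith
      linarith [habs2 ▸ this, hn2]
  linarith

end Aux16

/-- `p_θ` is a moment map for the `S¹`-action (its Hamiltonian
flow is translation in `θ`), `h` Poisson-commutes with `p_θ`, the origin is a
stable equilibrium of the reduced Hamiltonian `h₀ = q₁p₂ − q₂p₁`, and an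
unstable equilibrium of `h_μ` for every `μ ≠ 0`. -/
theorem stmt_16 :
    -- p_θ generates the S¹-action: {F, p_θ} = ∂F/∂θ for every observable F
    (∀ F : M16 → ℝ, Differentiable ℝ F →
      ∀ z : M16, pb16 F Ptheta16 z = fderiv ℝ F z (((0,0,0,0), 1, 0))) ∧
    -- h Poisson-commutes with p_θ
    (∀ z : M16, pb16 h16 Ptheta16 z = 0) ∧
    -- the origin is stable for the reduced Hamiltonian h₀
    StableOrigin16 (Xmu16 0) ∧
    -- and unstable for h_μ whenever μ ≠ 0
    (∀ μ : ℝ, μ ≠ 0 → ¬ StableOrigin16 (Xmu16 μ)) := by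
  
  refine ⟨?_, ?_, stable16_0, unstable16⟩
  · intro F _ z
    exact pb16_Ptheta F z
  · intro z
    rw [pb16_Ptheta h16 z, fderiv_h16_theta]
end
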